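/- arXiv:2305.16878 — 6 statements merged into one kernel-verified Lean document; each statement's English description precedes it below -/
import Mathlib

section
/- Let x, y be strings of length d over an alphabet Σ (functions from Fin d to Σ) and let 0 ≤ k < d. Then the indicator of HD(x,y) ≤ k equals ∑_{I ⊆ [d], |I| ≥ d-k} (-1)^{|I|-d+k} * C(|I|-1, d-k-1) * 1[x restricted to I equals y restricted to I]. -/
/-!
If `A` is the set of coordinates where `x` and `y` agree, only the subsets `I ⊆ A` contribute, and
grouping them by size turns the right-hand side into
`∑_{j ≥ m} (-1)^(j-m) C(j-1, m-1) C(|A|, j)` with `m = d - k`. By Pascal's rule this sum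
satisfies the recursion of `1[m ≤ |A|]` in `|A|`, the correction term being the
binomial inversion identity `∑_i (-1)^(i-r) C(n, i) C(i, r) = 1[n = r]`.
-/

open Finset

theorem sum_Icc_neg_one_pow_mul_choose_mul_choose (n r : ℕ) :
    ∑ i ∈ Icc r n, (-1 : ℤ) ^ (i - r) * n.choose i * i.choose r = if n = r then 1 else 0 := by
  obtain hnr | hrn := lt_or_ge n r
  · simp [Icc_eq_empty_of_lt hnr, hnr.ne]
  obtain ⟨s, rfl⟩ := Nat.exists_eq_add_of_le hrn
  have hterm : ∀ t ∈ range (s + 1),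
      (-1 : ℤ) ^ (r + t - r) * (r + s).choose (r + t) * (r + t).choose r =
        (r + s).choose r * ((-1) ^ t * s.choose t) := by
    intro t _
    have h := Nat.choose_mul (n := r + s) (k := r + t) (Nat.le_add_right r t)
    simp only [Nat.add_sub_cancel_left] at h ⊢
    rw [mul_assoc, ← Nat.cast_mul, h]
    push_cast
    ring
  rw [← Ico_add_one_right_eq_Icc, sum_Ico_eq_sum_range, show r + s + 1 - r = s + 1 by omega,
    sum_congr rfl hterm, ← mul_sum, Int.alternating_sum_range_choose]
  rcases s with _ | s <;> simp

theorem sum_Icc_neg_one_pow_mul_choose_pred_mul_choose (r a : ℕ) :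
    ∑ j ∈ Icc (r + 1) a, (-1 : ℤ) ^ (j - (r + 1)) * (j - 1).choose r * a.choose j =
      if r < a then 1 else 0 := by
  induction a with
  | zero => simp
  | succ a ih =>
    have hpascal : ∀ j ∈ Icc (r + 1) (a + 1),
        (-1 : ℤ) ^ (j - (r + 1)) * (j - 1).choose r * (a + 1).choose j =
          (-1 : ℤ) ^ (j - (r + 1)) * (j - 1).choose r * a.choose j +
            (-1 : ℤ) ^ (j - (r + 1)) * (j - 1).choose r * a.choose (j - 1) := by
      intro j hj
      rw [Nat.choose_succ_left a j (by rw [mem_Icc] at hj; omega)]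
      push_cast
      ring
    have htop :
        ∑ j ∈ Icc (r + 1) (a + 1), (-1 : ℤ) ^ (j - (r + 1)) * (j - 1).choose r * a.choose j =
        ∑ j ∈ Icc (r + 1) a, (-1 : ℤ) ^ (j - (r + 1)) * (j - 1).choose r * a.choose j := by
      refine (sum_subset (Icc_subset_Icc_right a.le_succ) fun j hj hj' => ?_).symm
      rw [mem_Icc] at hj hj'
      rw [Nat.choose_eq_zero_of_lt (n := a) (k := j) (by omega), Nat.cast_zero, mul_zero]
    have hshift : ∑ j ∈ Icc (r + 1) (a + 1),
        (-1 : ℤ) ^ (j - (r + 1)) * (j - 1).choose r * a.choose (j - 1) =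
          ∑ i ∈ Icc r a, (-1 : ℤ) ^ (i - r) * a.choose i * i.choose r := by
      rw [← map_add_right_Icc r a 1, sum_map]
      refine sum_congr rfl fun i _ => ?_
      simp only [addRightEmbedding_apply, Nat.add_sub_add_right, Nat.add_sub_cancel]
      ring
    rw [sum_congr rfl hpascal, sum_add_distrib, htop, ih, hshift,
      sum_Icc_neg_one_pow_mul_choose_mul_choose]
    split_ifs <;> omega

theorem sum_powerset_filter_le_card {ι M : Type*} [AddCommMonoid M] (s : Finset ι) (m : ℕ)
    (f : ℕ → M) :
    ∑ I ∈ s.powerset with m ≤ #I, f #I = ∑ j ∈ Icc m #s, (#s).choose j • f j := by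
  rw [sum_filter, sum_powerset_apply_card (fun j => if m ≤ j then f j else 0)]
  simp only [smul_ite, smul_zero]
  rw [← sum_filter]
  congr 1
  ext j
  simp only [mem_filter, mem_range, mem_Icc]
  omega

theorem sum_powerset_filter_mul_ite_forall {ι R : Type*} [NonAssocSemiring R] (s : Finset ι)
    (p : Finset ι → Prop) [DecidablePred p] (q : ι → Prop) [DecidablePred q]
    [∀ I : Finset ι, Decidable (∀ i ∈ I, q i)] (g : Finset ι → R) :
    ∑ I ∈ s.powerset with p I, g I * (if ∀ i ∈ I, q i then 1 else 0) =
      ∑ I ∈ (s.filter q).powerset with p I, g I := by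
  simp only [mul_ite, mul_one, mul_zero]
  rw [← sum_filter, filter_filter]
  congr 1
  ext I
  simp only [mem_filter, mem_powerset, subset_iff]
  grind

theorem card_filter_eq_add_hammingDist_eq_card {ι : Type*} [Fintype ι] {β : ι → Type*}
    [∀ i, DecidableEq (β i)] (x y : ∀ i, β i) :
    #{i | x i = y i} + hammingDist x y = Fintype.card ι :=
  card_filter_add_card_filter_not _

theorem hd_inclusion_exclusion {d k : ℕ} {Alpha : Type*} [DecidableEq Alpha]
    (x y : Fin d → Alpha) (hk : k < d) :
    (if hammingDist x y ≤ k then (1 : ℤ) else 0) =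
      ∑ I ∈ (Finset.univ : Finset (Fin d)).powerset.filter (fun I => d - k ≤ I.card),
        (-1 : ℤ) ^ (I.card - (d - k)) * ((I.card - 1).choose (d - k - 1)) *
          (if ∀ i ∈ I, x i = y i then 1 else 0) := by
  obtain ⟨r, hr⟩ : ∃ r, d - k = r + 1 := ⟨d - k - 1, by omega⟩
  have hagree := card_filter_eq_add_hammingDist_eq_card x y
  rw [Fintype.card_fin] at hagree
  rw [sum_powerset_filter_mul_ite_forall (p := fun I => d - k ≤ #I) (q := fun i => x i = y i),
    hr, Nat.add_sub_cancel,
    sum_powerset_filter_le_card _ _ fun j => (-1 : ℤ) ^ (j - (r + 1)) * ((j - 1).choose r : ℤ)]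
  set a := #{i | x i = y i}
  rw [if_congr (show hammingDist x y ≤ k ↔ r < a by omega) rfl rfl,
    ← sum_Icc_neg_one_pow_mul_choose_pred_mul_choose]
  refine sum_congr rfl fun j _ => ?_
  rw [nsmul_eq_mul]
  ring
end

section
/- Let x be a string of length d over alphabet Σ, X a finite set of strings of length d over Σ, and 0 ≤ k < d. Then the radius r(x,X) = max_{y ∈ X} HD(x,y) satisfies r(x,X) ≤ k if and only if |X| = ∑_{I ⊆ [d], |I| ≥ d-k} (-1)^{|I|-d+k} * C(|I|-1, d-k-1) * |{y ∈ X : x[I] = y[I]}|. -/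
/-! For each `y ∈ X`, the sum counts `y` with weight
`∑ (-1)^(|I| - m) * C(|I| - 1, m - 1)` over the sets `I` of size `≥ m = d - k` on which `x`
and `y` agree, i.e. over the subsets of the agreement set `A` of `x` and `y`. This weight depends
only on `|A| = d - HD(x, y)` and is `1` if `|A| ≥ m` and `0` otherwise, by Pascal's rule and
`∑ⱼ C(a, j) (-1)^(j - r) C(j, r) = [a = r]`. So the sum is the number of `y ∈ X` within distance
`k` of `x`, which is `|X|` exactly when all of them are. -/

open Finset

theorem sum_range_choose_mul_neg_one_pow_mul_choose (a r : ℕ) :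
    ∑ j ∈ range (a + 1),
        (a.choose j : ℤ) * (if r ≤ j then (-1 : ℤ) ^ (j - r) * j.choose r else 0) =
      if a = r then 1 else 0 := by
  rcases lt_or_ge a r with har | hra
  · rw [if_neg har.ne]
    refine sum_eq_zero fun j hj => ?_
    rw [if_neg (by grind), mul_zero]
  obtain ⟨n, rfl⟩ := Nat.exists_eq_add_of_le hra
  have hlow : ∑ j ∈ range r,
      ((r + n).choose j : ℤ) * (if r ≤ j then (-1 : ℤ) ^ (j - r) * j.choose r else 0) = 0 :=
    sum_eq_zero fun j hj => by rw [if_neg (by grind), mul_zero]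
  rw [show r + n + 1 = r + (n + 1) by ring, sum_range_add, hlow, zero_add]
  -- `C(r+n, r+i) C(r+i, r) = C(r+n, r) C(n, i)` leaves an alternating row sum
  calc ∑ i ∈ range (n + 1), ((r + n).choose (r + i) : ℤ) *
          (if r ≤ r + i then (-1 : ℤ) ^ (r + i - r) * (r + i).choose r else 0)
      = ((r + n).choose r : ℤ) * ∑ i ∈ range (n + 1), (-1 : ℤ) ^ i * n.choose i := by
        rw [mul_sum]
        refine sum_congr rfl fun i _ => ?_
        have h := Nat.choose_mul (n := r + n) (k := r + i) (s := r) (by omega)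
        simp only [Nat.add_sub_cancel_left, le_add_iff_nonneg_right, zero_le, if_true] at h ⊢
        have h' : ((r + n).choose (r + i) : ℤ) * (r + i).choose r =
            (r + n).choose r * n.choose i := by exact_mod_cast h
        linear_combination (-1 : ℤ) ^ i * h'
    _ = if r + n = r then 1 else 0 := by
        rw [Int.alternating_sum_range_choose]
        rcases n.eq_zero_or_pos with rfl | hn
        · simp
        · simp [hn.ne']

theorem sum_range_choose_mul_neg_one_pow_mul_choose_pred (r a : ℕ) :
    ∑ j ∈ range (a + 1), (a.choose j : ℤ) *
        (if r + 1 ≤ j then (-1 : ℤ) ^ (j - (r + 1)) * (j - 1).choose r else 0) =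
      if r + 1 ≤ a then 1 else 0 := by
  induction a with
  | zero => simp
  | succ a ih =>
    have hshift : ∀ i, (if r + 1 ≤ i + 1 then (-1 : ℤ) ^ (i + 1 - (r + 1)) * (i + 1 - 1).choose r
        else 0) = if r ≤ i then (-1 : ℤ) ^ (i - r) * i.choose r else 0 := by
      intro i
      simp only [Nat.add_le_add_iff_right, Nat.add_sub_add_right, Nat.add_sub_cancel]
    rw [sum_choose_succ_mul (fun i _ =>
      if r + 1 ≤ i then (-1 : ℤ) ^ (i - (r + 1)) * (i - 1).choose r else 0), ih]
    simp only [hshift]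
    rw [sum_range_choose_mul_neg_one_pow_mul_choose]
    split_ifs <;> omega

theorem sum_powerset_filter_card_neg_one_pow_mul_choose {β : Type*} (A : Finset β) (r : ℕ) :
    ∑ I ∈ A.powerset with r + 1 ≤ #I, (-1 : ℤ) ^ (#I - (r + 1)) * ((#I - 1).choose r : ℤ) =
      if r + 1 ≤ #A then 1 else 0 := by
  rw [sum_filter, sum_powerset_apply_card
    (fun n => if r + 1 ≤ n then (-1 : ℤ) ^ (n - (r + 1)) * ((n - 1).choose r : ℤ) else 0)]
  simp only [nsmul_eq_mul]
  exact sum_range_choose_mul_neg_one_pow_mul_choose_pred r #A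

theorem sum_mul_card_filter_subset {ι γ R : Type*} [DecidableEq ι] [CommSemiring R]
    (S : Finset (Finset ι)) (c : Finset ι → R) (X : Finset γ) (A : γ → Finset ι) :
    ∑ I ∈ S, c I * #{y ∈ X | I ⊆ A y} = ∑ y ∈ X, ∑ I ∈ S with I ⊆ A y, c I := by
  simp only [natCast_card_filter, mul_sum, mul_ite, mul_one, mul_zero, sum_filter]
  exact sum_comm

section agreement

variable {ι : Type*} [Fintype ι] {β : ι → Type*} [∀ i, DecidableEq (β i)]

def agreement (x y : ∀ i, β i) : Finset ι := {i | x i = y i}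

theorem subset_agreement_iff {x y : ∀ i, β i} {I : Finset ι} :
    I ⊆ agreement x y ↔ ∀ i ∈ I, x i = y i := by
  simp [agreement, subset_iff]

theorem card_agreement_add_hammingDist (x y : ∀ i, β i) :
    #(agreement x y) + hammingDist x y = Fintype.card ι :=
  card_filter_add_card_filter_not _

end agreement

theorem radius_inclusion_exclusion {d k : ℕ} {Alpha : Type*} [DecidableEq Alpha]
    (x : Fin d → Alpha) (X : Finset (Fin d → Alpha)) (hk : k < d) :
    (∀ y ∈ X, hammingDist x y ≤ k) ↔
      (X.card : ℤ) =
        ∑ I ∈ (Finset.univ : Finset (Fin d)).powerset.filter (fun I => d - k ≤ I.card),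
          (-1 : ℤ) ^ (I.card - (d - k)) * ((I.card - 1).choose (d - k - 1)) *
            ((X.filter (fun y => ∀ i ∈ I, x i = y i)).card : ℤ) := by
  obtain ⟨r, hr⟩ : ∃ r, d - k = r + 1 := ⟨d - k - 1, by omega⟩
  have hcount : ∑ I ∈ (univ : Finset (Fin d)).powerset with d - k ≤ #I,
      (-1 : ℤ) ^ (#I - (d - k)) * ((#I - 1).choose (d - k - 1)) *
        (#{y ∈ X | ∀ i ∈ I, x i = y i} : ℤ) = #{y ∈ X | hammingDist x y ≤ k} := by
    simp only [← subset_agreement_iff]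
    rw [sum_mul_card_filter_subset, natCast_card_filter]
    refine sum_congr rfl fun y _ => ?_
    have hfilter : ((univ : Finset (Fin d)).powerset.filter (d - k ≤ #·)).filter
        (· ⊆ agreement x y) = (agreement x y).powerset.filter (d - k ≤ #·) := by
      ext I; simp [and_comm]
    have hdist := card_agreement_add_hammingDist x y
    rw [Fintype.card_fin] at hdist
    rw [hfilter, hr, Nat.add_sub_cancel, sum_powerset_filter_card_neg_one_pow_mul_choose]
    exact if_congr (by omega) rfl rfl
  rw [hcount, eq_comm, Nat.cast_inj, card_filter_eq_iff]
end

section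
/- Let x be a string of length d over alphabet Σ, X a finite set of strings of length d over Σ, and 0 ≤ k < d. Then min_{y ∈ X \ {x}} HD(x,y) > k (with the convention that the minimum over the empty set is > k) if and only if 1[x ∈ X] = ∑_{I ⊆ [d], |I| ≥ d-k} (-1)^{|I|-d+k} * C(|I|-1, d-k-1) * |{y ∈ X : x[I] = y[I]}|. -/
/-!
Exchanging the two sums, the right-hand side counts every `y ∈ X` with the weight
`∑ (-1)^(|I|-d+k) C(|I|-1, d-k-1)` over the sets `I` of size at least `d - k` on which `x` and `y`
agree. These `I` are the large subsets of the agreement set of `x` and `y`, which has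
`d - HD(x,y)` elements, and a binomial identity shows that the weight is `1` if `HD(x,y) ≤ k` and
`0` otherwise. So the right-hand side is the number of `y ∈ X` within distance `k` of `x`; this
count includes `x` itself when `x ∈ X`, so it equals `1[x ∈ X]` exactly when no other point of `X`
is that close.
-/

open Finset

theorem Int.alternating_sum_Icc_choose_mul_choose (s a : ℕ) :
    ∑ j ∈ Icc s a, (-1 : ℤ) ^ (j - s) * (j.choose s * a.choose j) = if a = s then 1 else 0 := by
  rcases lt_or_ge a s with has | has
  · rw [Icc_eq_empty_of_lt has, sum_empty, if_neg has.ne]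
  obtain ⟨n, rfl⟩ := Nat.exists_eq_add_of_le' has
  have hterm (t : ℕ) : (-1 : ℤ) ^ (t + s - s) * ((t + s).choose s * (n + s).choose (t + s)) =
      (n + s).choose s * ((-1) ^ t * n.choose t) := by
    have h := Nat.choose_mul (n := n + s) (Nat.le_add_left s t)
    rw [Nat.add_sub_cancel, Nat.add_sub_cancel] at h
    have hz : ((n + s).choose (t + s) * (t + s).choose s : ℤ) = (n + s).choose s * n.choose t := by
      exact_mod_cast h
    rw [Nat.add_sub_cancel]
    linear_combination (-1 : ℤ) ^ t * hz
  rw [show Icc s (n + s) = (Icc 0 n).map (addRightEmbedding s) by simp, sum_map]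
  simp only [addRightEmbedding_apply, hterm, ← mul_sum, ← Nat.range_succ_eq_Icc_zero,
    Int.alternating_sum_range_choose, Nat.add_eq_right]
  split_ifs with hn <;> simp [hn]

theorem Int.alternating_sum_Icc_choose_pred_mul_choose {r : ℕ} (hr : 0 < r) (a : ℕ) :
    ∑ j ∈ Icc r a, (-1 : ℤ) ^ (j - r) * (j - 1).choose (r - 1) * a.choose j =
      if r ≤ a then 1 else 0 := by
  obtain ⟨p, rfl⟩ := Nat.exists_eq_add_one_of_ne_zero hr.ne'
  rw [Nat.add_sub_cancel]
  induction a with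
  | zero => simp
  | succ a ih =>
    -- Pascal's rule on `(a + 1).choose j` splits the sum into the case `s = p` of the previous
    -- identity and the sum for `a`.
    have hpascal : ∀ j ∈ Icc (p + 1) (a + 1),
        (-1 : ℤ) ^ (j - (p + 1)) * (j - 1).choose p * (a + 1).choose j =
          (-1) ^ (j - (p + 1)) * (j - 1).choose p * a.choose (j - 1) +
            (-1) ^ (j - (p + 1)) * (j - 1).choose p * a.choose j := by
      intro j hj
      obtain ⟨i, rfl⟩ := Nat.exists_eq_add_one_of_ne_zero (by grind : j ≠ 0)
      rw [Nat.add_sub_cancel, Nat.choose_succ_succ', Nat.cast_add]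
      ring
    have hshift : ∑ j ∈ Icc (p + 1) (a + 1),
        (-1 : ℤ) ^ (j - (p + 1)) * (j - 1).choose p * a.choose (j - 1) =
          if a = p then 1 else 0 := by
      rw [← map_add_right_Icc, sum_map, ← Int.alternating_sum_Icc_choose_mul_choose]
      simp only [addRightEmbedding_apply, Nat.add_sub_add_right, Nat.add_sub_cancel, mul_assoc]
    have htop : ∑ j ∈ Icc (p + 1) (a + 1),
        (-1 : ℤ) ^ (j - (p + 1)) * (j - 1).choose p * a.choose j =
          if p + 1 ≤ a then 1 else 0 := by
      rcases le_or_gt (p + 1) (a + 1) with hpa | hpa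
      · rw [sum_Icc_succ_top hpa, Nat.choose_succ_self, Nat.cast_zero, mul_zero, add_zero, ih]
      · rw [Icc_eq_empty_of_lt hpa, sum_empty, if_neg (by omega)]
    rw [sum_congr rfl hpascal, sum_add_distrib, hshift, htop]
    split_ifs <;> omega

theorem Finset.alternating_sum_powerset_filter_choose_pred {ι : Type*} {r : ℕ}
    (hr : 0 < r) (A : Finset ι) :
    ∑ I ∈ A.powerset.filter (fun I => r ≤ #I), (-1 : ℤ) ^ (#I - r) * (#I - 1).choose (r - 1) =
      if r ≤ #A then 1 else 0 := by
  rw [sum_filter, sum_powerset_apply_card (fun j => if r ≤ j then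
    (-1 : ℤ) ^ (j - r) * (j - 1).choose (r - 1) else 0),
    ← Int.alternating_sum_Icc_choose_pred_mul_choose hr]
  simp only [smul_ite, smul_zero, ← sum_filter, nsmul_eq_mul]
  rw [show (range (#A + 1)).filter (r ≤ ·) = Icc r #A by ext; simp; omega]
  exact sum_congr rfl fun j _ => by ring

theorem alternating_sum_agree_eq_ite_hammingDist {ι β : Type*} [Fintype ι]
    [DecidableEq β] {r : ℕ} (hr : 0 < r) (x y : ι → β) :
    ∑ I ∈ univ.powerset.filter (fun I => r ≤ #I),
        (-1 : ℤ) ^ (#I - r) * (#I - 1).choose (r - 1) * (if ∀ i ∈ I, x i = y i then 1 else 0) =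
      if r + hammingDist x y ≤ Fintype.card ι then 1 else 0 := by
  set A := univ.filter fun i => x i = y i
  have hcard : #A + hammingDist x y = Fintype.card ι :=
    card_filter_add_card_filter_not (s := univ) fun i => x i = y i
  simp only [mul_boole, ← sum_filter, filter_filter]
  rw [show univ.powerset.filter (fun I => r ≤ #I ∧ ∀ i ∈ I, x i = y i) = A.powerset.filter (r ≤ #·)
    by ext; simp [A, subset_iff, and_comm], alternating_sum_powerset_filter_choose_pred hr]
  simp only [← hcard, add_le_add_iff_right]

theorem Finset.card_filter_eq_ite_mem_iff {α : Type*} [DecidableEq α] {s : Finset α}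
    {p : α → Prop} [DecidablePred p] {a : α} (ha : p a) :
    #(s.filter p) = (if a ∈ s then 1 else 0) ↔ ∀ b ∈ s, b ≠ a → ¬p b := by
  have hsub : s.filter (· = a) ⊆ s.filter p := fun b hb => by grind
  rw [← card_singleton a, ← card_empty, ← apply_ite card, ← filter_eq' s a,
    le_antisymm_iff, and_iff_left (card_le_card hsub), eq_iff_card_le_of_subset hsub]
  constructor
  · intro h b hb hba hpb
    have hb' : b ∈ s.filter (· = a) := h ▸ mem_filter.2 ⟨hb, hpb⟩
    exact hba (mem_filter.1 hb').2
  · intro h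
    ext b
    grind

theorem remoteness_inclusion_exclusion {d k : ℕ} {Alpha : Type*} [DecidableEq Alpha]
    (x : Fin d → Alpha) (X : Finset (Fin d → Alpha)) (hk : k < d) :
    (∀ y ∈ X, y ≠ x → k < hammingDist x y) ↔
      (if x ∈ X then (1 : ℤ) else 0) =
        ∑ I ∈ (Finset.univ : Finset (Fin d)).powerset.filter (fun I => d - k ≤ I.card),
          (-1 : ℤ) ^ (I.card - (d - k)) * ((I.card - 1).choose (d - k - 1)) *
            ((X.filter (fun y => ∀ i ∈ I, x i = y i)).card : ℤ) := by
  have hcount : ∑ I ∈ (Finset.univ : Finset (Fin d)).powerset.filter (fun I => d - k ≤ I.card),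
      (-1 : ℤ) ^ (I.card - (d - k)) * ((I.card - 1).choose (d - k - 1)) *
        ((X.filter (fun y => ∀ i ∈ I, x i = y i)).card : ℤ) =
      #(X.filter fun y => hammingDist x y ≤ k) := by
    simp only [natCast_card_filter, mul_sum]
    rw [sum_comm]
    refine sum_congr rfl fun y _ => ?_
    -- the statement decides `∀ i ∈ I, x i = y i` by the instance special to `Fin d`
    convert alternating_sum_agree_eq_ite_hammingDist (Nat.sub_pos_of_lt hk) x y using 1
    · exact sum_congr rfl fun I _ => by congr
    · simp only [Fintype.card_fin, show d - k + hammingDist x y ≤ d ↔ hammingDist x y ≤ k by omega]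
  rw [hcount, eq_comm, ← Nat.cast_one, ← Nat.cast_zero, ← Nat.cast_ite, Nat.cast_inj,
    card_filter_eq_ite_mem_iff (p := fun y => hammingDist x y ≤ k) (by simp)]
  simp only [not_le]
end

section
/- Let X = {x_1,...,x_n} ⊆ {0,1}^d and let c_1,...,c_n ∈ {0,1}^{d''} be strings each of Hamming weight exactly 0.25d'' with pairwise Hamming distance at least 0.37d''. Let r = 10⌈d/d''⌉, and define a_i = x_i ∘ c_i^r and b_i = x̄_i ∘ 0^{r·d''}. Then for all i, j: HD(a_i, b_j) = d - HD(x_i, x_j) + r·0.25d''; for i ≠ j: HD(a_i, a_j) > d + r·0.25d''; and for all i, j: HD(b_i, b_j) ≤ d < r·0.25d''. -/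
/-!
Hamming distance is additive over concatenation and multiplies by `r` under `r`-fold repetition.
So `HD(aᵢ, bⱼ) = HD(xᵢ, x̄ⱼ) + r·wt(cᵢ) = (d - HD(xᵢ, xⱼ)) + r d''/4`, while
`HD(aᵢ, aⱼ) ≥ r·HD(cᵢ, cⱼ) ≥ 0.37 r d''`; since `r d'' ≥ 10 d`, the surplus `0.12 r d''` over
`r d''/4` exceeds `d`.
-/

/-- `r`-fold repetition of a string `c` of length `d''`. -/
def repStr {d'' : ℕ} (hd : 0 < d'') (r : ℕ) (c : Fin d'' → Bool) : Fin (r * d'') → Bool :=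
  fun j => c ⟨j.val % d'', Nat.mod_lt _ hd⟩

section Hamming

variable {ι : Type*} [Fintype ι] {β : Type*} [DecidableEq β]

theorem hammingDist_append {m k : ℕ} (u u' : Fin m → β) (v v' : Fin k → β) :
    hammingDist (Fin.append u v) (Fin.append u' v') = hammingDist u u' + hammingDist v v' := by
  simp only [hammingDist, Finset.card_filter, Fin.sum_univ_add, Fin.append_left, Fin.append_right]

theorem hammingDist_comp_equiv {κ : Type*} [Fintype κ] (e : κ ≃ ι) (u v : ι → β) :
    hammingDist (u ∘ e) (v ∘ e) = hammingDist u v := by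
  simp only [hammingDist]
  exact Finset.card_equiv e (by simp)

theorem hammingDist_comp_snd (α : Type*) [Fintype α] (u v : ι → β) :
    hammingDist (fun p : α × ι => u p.2) (fun p => v p.2) = Fintype.card α * hammingDist u v := by
  simp only [hammingDist]
  rw [← Finset.card_univ, ← Finset.card_product]
  congr 1
  ext p
  simp

theorem hammingDist_not_add_hammingDist (u v : ι → Bool) :
    hammingDist u (fun k => !v k) + hammingDist u v = Fintype.card ι := by
  simp only [hammingDist, Bool.ne_not]
  rw [Finset.card_filter_add_card_filter_not, Finset.card_univ]

theorem hammingDist_const_false (u : ι → Bool) :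
    hammingDist u (fun _ => false) = (Finset.univ.filter fun j => u j = true).card := by
  simp [hammingDist]

end Hamming

theorem repStr_eq_comp {d'' : ℕ} (hd : 0 < d'') (r : ℕ) (c : Fin d'' → Bool) :
    repStr hd r c = (fun p : Fin r × Fin d'' => c p.2) ∘ finProdFinEquiv.symm :=
  rfl

theorem hammingDist_repStr {d'' : ℕ} (hd : 0 < d'') (r : ℕ) (c c' : Fin d'' → Bool) :
    hammingDist (repStr hd r c) (repStr hd r c') = r * hammingDist c c' := by
  rw [repStr_eq_comp, repStr_eq_comp, hammingDist_comp_equiv, hammingDist_comp_snd,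
    Fintype.card_fin]

theorem gadget_distances_general {n d d'' : ℕ} (hd : 1 ≤ d) (hd'' : 0 < d'')
    (x : Fin n → Fin d → Bool) (c : Fin n → Fin d'' → Bool)
    (hw : ∀ i, 4 * (Finset.univ.filter fun j => c i j = true).card = d'')
    (hdist : ∀ i j, i ≠ j → 37 * d'' ≤ 100 * hammingDist (c i) (c j)) :
    let r := 10 * ((d + d'' - 1) / d'')
    let a : Fin n → Fin (d + r * d'') → Bool :=
      fun i => Fin.append (x i) (repStr hd'' r (c i))
    let b : Fin n → Fin (d + r * d'') → Bool :=
      fun i => Fin.append (fun j => !(x i j)) (fun _ => false)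
    (∀ i j, 4 * hammingDist (a i) (b j) + 4 * hammingDist (x i) (x j) = 4 * d + r * d'') ∧
    (∀ i j, i ≠ j → 4 * d + r * d'' < 4 * hammingDist (a i) (a j)) ∧
    (∀ i j, hammingDist (b i) (b j) ≤ d) ∧ 4 * d < r * d'' := by
  intro r a b
  have hr : 10 * d ≤ r * d'' :=
    calc 10 * d ≤ 10 * (d'' * (d ⌈/⌉ d'')) := by
          have : d ≤ d'' * (d ⌈/⌉ d'') := le_smul_ceilDiv hd''
          omega
      _ = r * d'' := by rw [Nat.ceilDiv_eq_add_pred_div]; ring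
  refine ⟨fun i j => ?_, fun i j hij => ?_, fun i j => ?_, by omega⟩
  · have hab : hammingDist (a i) (b j) =
        hammingDist (x i) (fun k => !x j k) + r * hammingDist (c i) (fun _ => false) := by
      -- the all-`false` tail of `b j` is, definitionally, `repStr` of the all-`false` string
      rw [← hammingDist_repStr hd'']
      exact hammingDist_append _ _ _ _
    have hx := hammingDist_not_add_hammingDist (x i) (x j)
    have hc : r * d'' = 4 * (r * hammingDist (c i) (fun _ => false)) := by
      rw [hammingDist_const_false, mul_left_comm, hw i]
    rw [Fintype.card_fin] at hx
    omega
  · have haa : hammingDist (a i) (a j) = hammingDist (x i) (x j) + r * hammingDist (c i) (c j) :=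
      (hammingDist_append _ _ _ _).trans (by rw [hammingDist_repStr])
    have hc := Nat.mul_le_mul_left r (hdist i j hij)
    rw [haa]
    linarith
  · calc hammingDist (b i) (b j) = hammingDist (fun k => !x i k) (fun k => !x j k) := by
          rw [hammingDist_append, hammingDist_self, add_zero]
      _ ≤ d := (hammingDist_le_card_fintype).trans_eq (Fintype.card_fin d)

theorem gadget_distances {n d d'' : ℕ} (hn : 2 ≤ n) (hd : 1 ≤ d) (hd'' : 0 < d'')
    (x : Fin n → Fin d → Bool) (c : Fin n → Fin d'' → Bool)
    (hw : ∀ i, 4 * (Finset.univ.filter fun j => c i j = true).card = d'')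
    (hdist : ∀ i j, i ≠ j → 37 * d'' ≤ 100 * hammingDist (c i) (c j)) :
    let r := 10 * ((d + d'' - 1) / d'')
    let a : Fin n → Fin (d + r * d'') → Bool :=
      fun i => Fin.append (x i) (repStr hd'' r (c i))
    let b : Fin n → Fin (d + r * d'') → Bool :=
      fun i => Fin.append (fun j => !(x i j)) (fun _ => false)
    (∀ i j, 4 * hammingDist (a i) (b j) + 4 * hammingDist (x i) (x j) = 4 * d + r * d'') ∧
    (∀ i j, i ≠ j → 4 * d + r * d'' < 4 * hammingDist (a i) (a j)) ∧
    (∀ i j, hammingDist (b i) (b j) ≤ d) ∧ 4 * d < r * d'' :=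
  gadget_distances_general hd hd'' x c hw hdist
end

section
/- Let Σ be an alphabet of size q, let C be a clause over q-ary variables touching groups P(C) of a partition of [N] into groups of size s with q | s, and let α* ∈ [q]^N be a balanced satisfying assignment of a formula containing C (α* satisfies C and assigns each value exactly s/q times per group). Then for every assignment α ∈ [q]^N that falsifies C and is constant on each group outside P(C), HD(α*, α) ≥ 1 + (N/s - |P(C)|) · (q-1)s/q. -/
/-!
The groups partition `[N]`, so the Hamming distance is the sum over groups of the number of
disagreements inside each group, and `P` has `N / s` groups. A literal of `C` satisfied by
`αstar` and falsified by `α` gives a disagreement inside one of the groups of `P(C)`. On every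
other group `α` is constant, say `v`, while `αstar` takes the value `v` only `s / q` times
there, so the two disagree on at least `s - s / q ≥ (q - 1) * (s / q)` positions of that group.
-/

open Finset

section Partition

variable {α : Type*} [Fintype α] [DecidableEq α] {P : Finset (Finset α)}

theorem card_filter_univ_eq_sum_of_cover (hdisj : (P : Set (Finset α)).PairwiseDisjoint id)
    (hcover : ∀ i, ∃ G ∈ P, i ∈ G) (p : α → Prop) [DecidablePred p] :
    #(univ.filter p) = ∑ G ∈ P, #(G.filter p) := by
  have huniv : (univ : Finset α) = P.biUnion id := by
    ext i
    simpa using hcover i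
  rw [huniv, filter_biUnion, card_biUnion]
  · rfl
  · exact fun G hG G' hG' hne => disjoint_filter_filter (hdisj hG hG' hne)

theorem card_eq_card_mul_of_cover {s : ℕ} (hcard : ∀ G ∈ P, #G = s)
    (hdisj : (P : Set (Finset α)).PairwiseDisjoint id) (hcover : ∀ i, ∃ G ∈ P, i ∈ G) :
    Fintype.card α = #P * s := by
  have h := card_filter_univ_eq_sum_of_cover hdisj hcover fun _ => True
  simp only [filter_true, card_univ] at h
  rw [h, sum_congr rfl hcard, sum_const, smul_eq_mul]

theorem hammingDist_eq_sum_of_cover {β : Type*} [DecidableEq β]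
    (hdisj : (P : Set (Finset α)).PairwiseDisjoint id) (hcover : ∀ i, ∃ G ∈ P, i ∈ G)
    (f g : α → β) :
    hammingDist f g = ∑ G ∈ P, #(G.filter fun i => f i ≠ g i) :=
  card_filter_univ_eq_sum_of_cover hdisj hcover _

end Partition

theorem mul_div_le_card_filter_ne_of_eq_const {α β : Type*} [DecidableEq β] {G : Finset α}
    {f g : α → β} {v : β} {q s : ℕ} (hG : #G = s) (hv : #(G.filter fun i => f i = v) = s / q)
    (hg : ∀ i ∈ G, g i = v) :
    (q - 1) * (s / q) ≤ #(G.filter fun i => f i ≠ g i) := by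
  have hsplit := card_filter_add_card_filter_not (s := G) (p := fun i => f i = v)
  have hne : (G.filter fun i => f i ≠ g i) = G.filter fun i => ¬f i = v :=
    filter_congr fun i hi => by rw [hg i hi]
  have hle := Nat.mul_div_le s q
  rw [hne, Nat.sub_one_mul]
  omega

theorem completeness_distance_bound_general {N q s : ℕ}
    (P : Finset (Finset (Fin N)))
    (hcard : ∀ G ∈ P, G.card = s)
    (hdisj : ∀ G ∈ P, ∀ G' ∈ P, G ≠ G' → Disjoint G G')
    (hcover : ∀ i : Fin N, ∃ G ∈ P, i ∈ G)
    (C : Finset (Fin N × Fin q))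
    (αstar : Fin N → Fin q)
    (hsat : ∃ l ∈ C, αstar l.1 ≠ l.2)
    (hbal : ∀ G ∈ P, ∀ v : Fin q, (G.filter fun i => αstar i = v).card = s / q)
    (α : Fin N → Fin q)
    (hfals : ∀ l ∈ C, α l.1 = l.2)
    (hconst : ∀ G ∈ P, (∀ l ∈ C, l.1 ∉ G) → ∃ v, ∀ i ∈ G, α i = v) :
    1 + (N / s - (P.filter fun G => ∃ l ∈ C, l.1 ∈ G).card) * ((q - 1) * (s / q))
      ≤ hammingDist αstar α := by
  have hdisj' : (P : Set (Finset (Fin N))).PairwiseDisjoint id :=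
    fun G hG G' hG' => hdisj G hG G' hG'
  obtain ⟨l, hlC, hlne⟩ := hsat
  obtain ⟨G₀, hG₀P, hlG₀⟩ := hcover l.1
  have hs : 0 < s := hcard G₀ hG₀P ▸ card_pos.mpr ⟨l.1, hlG₀⟩
  have hPcard : #P = N / s := by
    have h := card_eq_card_mul_of_cover hcard hdisj' hcover
    rw [Fintype.card_fin] at h
    exact (Nat.div_eq_of_eq_mul_left hs h).symm
  set Q := P.filter fun G => ∃ l ∈ C, l.1 ∈ G
  set d : Finset (Fin N) → ℕ := fun G => #(G.filter fun i => αstar i ≠ α i)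
  have hQ : 1 ≤ ∑ G ∈ Q, d G := by
    have hG₀Q : G₀ ∈ Q := mem_filter.mpr ⟨hG₀P, l, hlC, hlG₀⟩
    have hd : 1 ≤ d G₀ := card_pos.mpr ⟨l.1, mem_filter.mpr ⟨hlG₀, hfals l hlC ▸ hlne⟩⟩
    exact hd.trans (single_le_sum (fun _ _ => Nat.zero_le _) hG₀Q)
  have hrest : (N / s - #Q) * ((q - 1) * (s / q)) ≤ ∑ G ∈ P \ Q, d G := by
    rw [← hPcard, ← card_sdiff_of_subset (filter_subset _ _), ← smul_eq_mul]
    refine card_nsmul_le_sum _ _ _ fun G hG => ?_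
    obtain ⟨hGP, hGQ⟩ := mem_sdiff.mp hG
    obtain ⟨v, hv⟩ := hconst G hGP fun l hl hlG => hGQ (mem_filter.mpr ⟨hGP, l, hl, hlG⟩)
    exact mul_div_le_card_filter_ne_of_eq_const (hcard G hGP) (hbal G hGP v) hv
  rw [hammingDist_eq_sum_of_cover hdisj' hcover,
    ← sum_filter_add_sum_filter_not P (fun G => ∃ l ∈ C, l.1 ∈ G), filter_not]
  exact add_le_add hQ hrest

theorem completeness_distance_bound {N q s : ℕ} (hq : 0 < q) (hqs : q ∣ s)
    (P : Finset (Finset (Fin N)))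
    (hcard : ∀ G ∈ P, G.card = s)
    (hdisj : ∀ G ∈ P, ∀ G' ∈ P, G ≠ G' → Disjoint G G')
    (hcover : ∀ i : Fin N, ∃ G ∈ P, i ∈ G)
    (C : Finset (Fin N × Fin q))
    (αstar : Fin N → Fin q)
    (hsat : ∃ l ∈ C, αstar l.1 ≠ l.2)
    (hbal : ∀ G ∈ P, ∀ v : Fin q, (G.filter fun i => αstar i = v).card = s / q)
    (α : Fin N → Fin q)
    (hfals : ∀ l ∈ C, α l.1 = l.2)
    (hconst : ∀ G ∈ P, (∀ l ∈ C, l.1 ∉ G) → ∃ v, ∀ i ∈ G, α i = v) :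
    1 + (N / s - (P.filter fun G => ∃ l ∈ C, l.1 ∈ G).card) * ((q - 1) * (s / q))
      ≤ hammingDist αstar α :=
  completeness_distance_bound_general P hcard hdisj hcover C αstar hsat hbal α hfals hconst
end

section
/- Let q | s, let a partition of [N] into groups of size s be given, let C be a clause touching groups P(C), and let α* ∈ [q]^N be any assignment falsifying C. Then there exists α ∈ [q]^N such that α falsifies C, α is constant on every group outside P(C), and HD(α*, α) ≤ (N/s - |P(C)|) · (q-1)s/q. -/
/-!
Keep `α*` on the groups touched by `C` and overwrite every other group with a symbol occurring most
often in `α*` on it. By pigeonhole that symbol fills at least `s/q` of the group's `s` positions, so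
each overwritten group costs at most `s - s/q = (q-1)s/q` changes, and disjoint groups of size `s`
number at most `N/s`.
-/

open Finset

theorem Nat.sub_div_eq_sub_one_mul_div {q s : ℕ} (hqs : q ∣ s) : s - s / q = (q - 1) * (s / q) := by
  rw [Nat.sub_one_mul, Nat.mul_div_cancel' hqs]

theorem Finset.card_mul_le_card_of_pairwiseDisjoint {ι : Type*} [Fintype ι] [DecidableEq ι]
    {P : Finset (Finset ι)} {s : ℕ} (hP : (P : Set (Finset ι)).PairwiseDisjoint id)
    (hcard : ∀ G ∈ P, #G = s) : #P * s ≤ Fintype.card ι :=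
  calc #P * s = ∑ G ∈ P, #G := (sum_const_nat hcard).symm
    _ = #(P.biUnion id) := (card_biUnion hP).symm
    _ ≤ Fintype.card ι := card_le_univ _

theorem Finset.exists_card_filter_ne_le {ι β : Type*} [Fintype β] [Nonempty β] [DecidableEq β]
    (G : Finset ι) (f : ι → β) : ∃ b, #{i ∈ G | f i ≠ b} ≤ #G - #G / Fintype.card β := by
  obtain ⟨b, -, hb⟩ := exists_le_card_fiber_of_mul_le_card_of_maps_to
    (fun i _ => mem_univ (f i)) univ_nonempty (by rw [card_univ]; exact Nat.mul_div_le #G _)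
  have hsplit : #{i ∈ G | f i = b} + #{i ∈ G | f i ≠ b} = #G := card_filter_add_card_filter_not _
  exact ⟨b, (Nat.eq_sub_of_add_eq' hsplit).trans_le (Nat.sub_le_sub_left hb _)⟩

section OverwriteBlocks

variable {ι β : Type*}

open Classical in
noncomputable def overwriteBlocks (U : Finset (Finset ι)) (v : Finset ι → β) (x : ι → β) (i : ι) :
    β :=
  if h : ∃ G ∈ U, i ∈ G then v h.choose else x i

variable {U : Finset (Finset ι)} {v : Finset ι → β} {x : ι → β}

theorem overwriteBlocks_of_mem (hU : (U : Set (Finset ι)).PairwiseDisjoint id) {G : Finset ι}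
    (hG : G ∈ U) {i : ι} (hi : i ∈ G) : overwriteBlocks U v x i = v G := by
  have h : ∃ G ∈ U, i ∈ G := ⟨G, hG, hi⟩
  rw [overwriteBlocks, dif_pos h,
    hU.elim_finset (f := id) h.choose_spec.1 hG i h.choose_spec.2 hi]

theorem overwriteBlocks_of_forall_notMem {i : ι} (hi : ∀ G ∈ U, i ∉ G) :
    overwriteBlocks U v x i = x i := by
  rw [overwriteBlocks, dif_neg (by simpa using hi)]

theorem hammingDist_overwriteBlocks_le [Fintype ι] [DecidableEq β] :
    hammingDist x (overwriteBlocks U v x) ≤ ∑ G ∈ U, #{i ∈ G | x i ≠ v G} := by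
  classical
  refine (card_le_card fun i hi => ?_).trans card_biUnion_le
  rw [mem_filter] at hi
  rw [mem_biUnion]
  by_cases h : ∃ G ∈ U, i ∈ G
  · rw [overwriteBlocks, dif_pos h] at hi
    exact ⟨h.choose, h.choose_spec.1, mem_filter.2 ⟨h.choose_spec.2, hi.2⟩⟩
  · exact absurd (overwriteBlocks_of_forall_notMem (by simpa using h)).symm hi.2

end OverwriteBlocks

theorem soundness_close_falsifier_general {N q s : ℕ} (hq : 0 < q) (hqs : q ∣ s)
    (P : Finset (Finset (Fin N)))
    (hcard : ∀ G ∈ P, G.card = s)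
    (hdisj : ∀ G ∈ P, ∀ G' ∈ P, G ≠ G' → Disjoint G G')
    (C : Finset (Fin N × Fin q))
    (αstar : Fin N → Fin q)
    (hfals : ∀ l ∈ C, αstar l.1 = l.2) :
    ∃ α : Fin N → Fin q,
      (∀ l ∈ C, α l.1 = l.2) ∧
      (∀ G ∈ P, (∀ l ∈ C, l.1 ∉ G) → ∃ v, ∀ i ∈ G, α i = v) ∧
      hammingDist αstar α
        ≤ (N / s - (P.filter fun G => ∃ l ∈ C, l.1 ∈ G).card) * ((q - 1) * (s / q)) := by
  have hP : (P : Set (Finset (Fin N))).PairwiseDisjoint id := hdisj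
  have : Nonempty (Fin q) := ⟨⟨0, hq⟩⟩
  choose v hv using fun G : Finset (Fin N) => exists_card_filter_ne_le G αstar
  set U := P.filter fun G => ¬∃ l ∈ C, l.1 ∈ G
  have hUP : U ⊆ P := filter_subset _ _
  have hU : ∀ G, G ∈ U ↔ G ∈ P ∧ ∀ l ∈ C, l.1 ∉ G := by simp [U]
  refine ⟨overwriteBlocks U v αstar, fun l hl => ?_, fun G hG hG' => ⟨v G, fun i hi => ?_⟩, ?_⟩
  · rw [overwriteBlocks_of_forall_notMem fun G hG => ((hU G).1 hG).2 l hl]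
    exact hfals l hl
  · exact overwriteBlocks_of_mem (hP.subset hUP) ((hU G).2 ⟨hG, hG'⟩) hi
  calc hammingDist αstar (overwriteBlocks U v αstar) ≤ ∑ G ∈ U, #{i ∈ G | αstar i ≠ v G} :=
        hammingDist_overwriteBlocks_le
    _ ≤ ∑ _G ∈ U, (s - s / q) :=
        sum_le_sum fun G hG => by simpa [hcard G (hUP hG)] using hv G
    _ = #U * ((q - 1) * (s / q)) := by
        rw [sum_const, smul_eq_mul, Nat.sub_div_eq_sub_one_mul_div hqs]
    _ ≤ _ := by
        rcases s.eq_zero_or_pos with rfl | hs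
        · simp
        have hPN := card_mul_le_card_of_pairwiseDisjoint hP hcard
        rw [Fintype.card_fin, ← Nat.le_div_iff_mul_le hs] at hPN
        have hsplit : #(P.filter fun G => ∃ l ∈ C, l.1 ∈ G) + #U = #P :=
          card_filter_add_card_filter_not _
        gcongr
        omega

theorem soundness_close_falsifier {N q s : ℕ} (hq : 0 < q) (hqs : q ∣ s)
    (P : Finset (Finset (Fin N)))
    (hcard : ∀ G ∈ P, G.card = s)
    (hdisj : ∀ G ∈ P, ∀ G' ∈ P, G ≠ G' → Disjoint G G')
    (hcover : ∀ i : Fin N, ∃ G ∈ P, i ∈ G)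
    (C : Finset (Fin N × Fin q))
    (αstar : Fin N → Fin q)
    (hfals : ∀ l ∈ C, αstar l.1 = l.2) :
    ∃ α : Fin N → Fin q,
      (∀ l ∈ C, α l.1 = l.2) ∧
      (∀ G ∈ P, (∀ l ∈ C, l.1 ∉ G) → ∃ v, ∀ i ∈ G, α i = v) ∧
      hammingDist αstar α
        ≤ (N / s - (P.filter fun G => ∃ l ∈ C, l.1 ∈ G).card) * ((q - 1) * (s / q)) :=
  soundness_close_falsifier_general hq hqs P hcard hdisj C αstar hfals
end
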